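/- arXiv:2205.06810 — 6 statements merged into one kernel-verified Lean document; each statement's English description precedes it below -/
import Mathlib

section
/- Let $H \in \mathbb{C}^{n\times n}$ be invertible and let $p(z) = (z-r_1)\cdots(z-r_k)$ be a monic polynomial with nonzero values on the spectrum of $H$. Suppose $p(H) = QR$ is the QR decomposition (Q unitary, R upper triangular with positive diagonal). Then $\|e_n^* p(H)^{-1}\|^{-1} = R_{nn}$, where $e_n$ is the last standard basis vector. -/
open Polynomial Matrix

/-- The Euclidean norm of the last row of a matrix, i.e. `‖eₙ* A‖`. -/
noncomputable def rowNorm {n : ℕ} (A : Matrix (Fin (n + 1)) (Fin (n + 1)) ℂ) : ℝ :=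
  Real.sqrt (∑ j, ‖A (Fin.last n) j‖ ^ 2)

/-- `M = Q R` is a QR decomposition: `Q` unitary, `R` upper triangular with
strictly positive (real) diagonal entries. -/
def IsQR {n : ℕ} (M Q R : Matrix (Fin n) (Fin n) ℂ) : Prop :=
  M = Q * R ∧ Q ∈ Matrix.unitaryGroup (Fin n) ℂ ∧ R.BlockTriangular id ∧
  ∀ i, 0 < (R i i).re ∧ (R i i).im = 0

/-!
From `M = QR` we get `M⁻¹ = R⁻¹ Q*`. The last row of the upper triangular `R` is `R_{nn} eₙ*`,
so the last row of `R⁻¹` is `R_{nn}⁻¹ eₙ*`, and `eₙ* M⁻¹ = R_{nn}⁻¹ eₙ* Q*` is `R_{nn}⁻¹` times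
the conjugate of the last column of `Q`, a unit vector. Hence `‖eₙ* M⁻¹‖ = |R_{nn}|⁻¹ = R_{nn}⁻¹`.
-/

namespace Matrix

variable {n : ℕ} {α : Type*}

lemma IsUpperTriangular.apply_last_of_ne [Zero α] {R : Matrix (Fin (n + 1)) (Fin (n + 1)) α}
    (hR : R.IsUpperTriangular) {j : Fin (n + 1)} (hj : j ≠ Fin.last n) :
    R (Fin.last n) j = 0 :=
  hR (lt_of_le_of_ne (Fin.le_last j) hj)

lemma IsUpperTriangular.inv_apply_last [Field α] {R : Matrix (Fin (n + 1)) (Fin (n + 1)) α}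
    (hR : R.IsUpperTriangular) (hdet : IsUnit R.det) (j : Fin (n + 1)) :
    R⁻¹ (Fin.last n) j = (R (Fin.last n) (Fin.last n))⁻¹ * (1 : Matrix _ _ α) (Fin.last n) j := by
  have hlast : R (Fin.last n) (Fin.last n) ≠ 0 := by
    rw [det_of_isUpperTriangular hR] at hdet
    exact Finset.prod_ne_zero_iff.mp hdet.ne_zero _ (Finset.mem_univ _)
  have hRR : ∑ m, R (Fin.last n) m * R⁻¹ m j = (1 : Matrix _ _ α) (Fin.last n) j := by
    rw [← mul_apply, mul_nonsing_inv R hdet]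
  rw [Finset.sum_eq_single_of_mem (Fin.last n) (Finset.mem_univ _)
    fun m _ hm => by rw [hR.apply_last_of_ne hm, zero_mul]] at hRR
  rw [← hRR, inv_mul_cancel_left₀ hlast]

lemma sum_norm_sq_apply_of_mem_unitaryGroup {ι 𝕜 : Type*} [Fintype ι] [DecidableEq ι] [RCLike 𝕜]
    {Q : Matrix ι ι 𝕜} (hQ : Q ∈ unitaryGroup ι 𝕜) (i : ι) : ∑ j, ‖Q j i‖ ^ 2 = 1 := by
  have h := congrFun (congrFun (mem_unitaryGroup_iff'.mp hQ) i) i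
  simp only [mul_apply, star_apply, one_apply_eq, RCLike.star_def, RCLike.conj_mul] at h
  exact_mod_cast h

end Matrix

namespace IsQR

section

variable {n : ℕ} {M Q R : Matrix (Fin n) (Fin n) ℂ}

lemma isUpperTriangular (h : IsQR M Q R) : R.IsUpperTriangular := h.2.2.1

lemma mem_unitaryGroup (h : IsQR M Q R) : Q ∈ unitaryGroup (Fin n) ℂ := h.2.1

lemma re_diag_pos (h : IsQR M Q R) (i : Fin n) : 0 < (R i i).re := (h.2.2.2 i).1

lemma im_diag (h : IsQR M Q R) (i : Fin n) : (R i i).im = 0 := (h.2.2.2 i).2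

lemma isUnit_det (h : IsQR M Q R) : IsUnit R.det := by
  rw [isUnit_iff_ne_zero, det_of_isUpperTriangular h.isUpperTriangular]
  exact Finset.prod_ne_zero_iff.mpr fun i _ hi => (h.re_diag_pos i).ne' (by simp [hi])

lemma inv_eq (h : IsQR M Q R) : M⁻¹ = R⁻¹ * star Q := by
  rw [h.1, Matrix.mul_inv_rev, inv_eq_left_inv (Unitary.star_mul_self_of_mem h.mem_unitaryGroup)]

lemma ofReal_re_diag (h : IsQR M Q R) (i : Fin n) : ((R i i).re : ℂ) = R i i :=
  Complex.ext rfl (by simp [h.im_diag i])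

lemma norm_diag (h : IsQR M Q R) (i : Fin n) : ‖R i i‖ = (R i i).re := by
  have hnorm := Complex.norm_of_nonneg (h.re_diag_pos i).le
  rwa [h.ofReal_re_diag] at hnorm

end

variable {n : ℕ} {M Q R : Matrix (Fin (n + 1)) (Fin (n + 1)) ℂ}

lemma inv_apply_last (h : IsQR M Q R) (j : Fin (n + 1)) :
    M⁻¹ (Fin.last n) j = (R (Fin.last n) (Fin.last n))⁻¹ * star (Q j (Fin.last n)) := by
  simp [h.inv_eq, mul_apply, h.isUpperTriangular.inv_apply_last h.isUnit_det, one_apply]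

lemma rowNorm_inv (h : IsQR M Q R) : rowNorm M⁻¹ = (R (Fin.last n) (Fin.last n)).re⁻¹ := by
  have hrow (j : Fin (n + 1)) : ‖M⁻¹ (Fin.last n) j‖ ^ 2
      = ‖R (Fin.last n) (Fin.last n)‖⁻¹ ^ 2 * ‖Q j (Fin.last n)‖ ^ 2 := by
    rw [h.inv_apply_last, norm_mul, norm_inv, norm_star, mul_pow]
  rw [rowNorm, Finset.sum_congr rfl fun j _ => hrow j, ← Finset.mul_sum,
    sum_norm_sq_apply_of_mem_unitaryGroup h.mem_unitaryGroup, mul_one,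
    Real.sqrt_sq (by positivity), h.norm_diag]

lemma inv_rowNorm_inv (h : IsQR M Q R) :
    ((rowNorm M⁻¹)⁻¹ : ℂ) = R (Fin.last n) (Fin.last n) := by
  rw [h.rowNorm_inv, ← Complex.ofReal_inv, inv_inv, h.ofReal_re_diag]

end IsQR

theorem stmt0_general {n : ℕ} (H : Matrix (Fin (n + 1)) (Fin (n + 1)) ℂ) (p : ℂ[X])
    (Q R : Matrix (Fin (n + 1)) (Fin (n + 1)) ℂ)
    (hQR : IsQR (aeval H p) Q R) :
    ((rowNorm ((aeval H p)⁻¹))⁻¹ : ℂ) = R (Fin.last n) (Fin.last n) :=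
  hQR.inv_rowNorm_inv

/-- If `H` is invertible, `p(z) = (z - r₁)⋯(z - r_k)` is nonzero on the spectrum of `H`,
and `p(H) = QR` is the QR decomposition, then `‖eₙ* p(H)⁻¹‖⁻¹ = R_{nn}`. -/
theorem stmt0 {n k : ℕ} (H : Matrix (Fin (n + 1)) (Fin (n + 1)) ℂ) (hH : IsUnit H)
    (r : Fin k → ℂ) (p : ℂ[X]) (hp : p = ∏ i, (X - C (r i)))
    (hnz : ∀ lam ∈ spectrum ℂ H, p.eval lam ≠ 0)
    (Q R : Matrix (Fin (n + 1)) (Fin (n + 1)) ℂ)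
    (hQR : IsQR (aeval H p) Q R) :
    ((rowNorm ((aeval H p)⁻¹))⁻¹ : ℂ) = R (Fin.last n) (Fin.last n) :=
  stmt0_general H p Q R hQR
end

section
/- Let $H$ be an $n \times n$ complex matrix with $\mathrm{gap}(H) > 0$, let $\mathcal{R} = \{r_1,\dots,r_k\} \subset \mathbb{C}$, and let $0 < \eta_1 \le \eta_2$ satisfy $\eta_1 + \eta_2 \le \mathrm{gap}(H)/2$. Let $w_1,\dots,w_k$ be independent uniform random points of the disk $D(0,\eta_2)$ and set $\check{r}_i = r_i + w_i$. Then with probability at least $1 - k(\eta_1/\eta_2)^2$, $\min_i \mathrm{dist}(\check{r}_i, \mathrm{Spec}(H)) \ge \eta_1$. -/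
open Matrix MeasureTheory

/-- Minimum eigenvalue gap of a matrix. -/
noncomputable def gap {m : Type*} [Fintype m] [DecidableEq m] (M : Matrix m m ℂ) : ℝ :=
  sInf {d | ∃ lam ∈ spectrum ℂ M, ∃ mu ∈ spectrum ℂ M, lam ≠ mu ∧ d = dist lam mu}

/-- The uniform probability measure on the closed disk of radius `η` about `0` in `ℂ`. -/
noncomputable def unifDisk (η : ℝ) : Measure ℂ :=
  (volume (Metric.closedBall (0 : ℂ) η))⁻¹ • volume.restrict (Metric.closedBall (0 : ℂ) η)

lemma gap_le {m : Type*} [Fintype m] [DecidableEq m] (M : Matrix m m ℂ)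
    {lam mu : ℂ} (hl : lam ∈ spectrum ℂ M) (hm : mu ∈ spectrum ℂ M) (hne : lam ≠ mu) :
    gap M ≤ dist lam mu := by
  apply csInf_le
  · exact ⟨0, by rintro d ⟨a, _, b, _, _, rfl⟩; positivity⟩
  · exact ⟨lam, hl, mu, hm, hne, rfl⟩

lemma unifDisk_univ (η : ℝ) (h : 0 < η) : unifDisk η Set.univ = 1 := by
  have h0 : volume (Metric.closedBall (0 : ℂ) η) ≠ 0 :=
    (Metric.measure_closedBall_pos volume 0 h).ne'
  have ht : volume (Metric.closedBall (0 : ℂ) η) ≠ ⊤ :=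
    (MeasureTheory.measure_closedBall_lt_top).ne
  simp only [unifDisk, Measure.smul_apply, Measure.restrict_apply MeasurableSet.univ,
    Set.univ_inter, smul_eq_mul]
  exact ENNReal.inv_mul_cancel h0 ht

lemma isOpen_bad {n : ℕ} (H : Matrix (Fin n) (Fin n) ℂ) (c : ℂ) (η₁ : ℝ) :
    IsOpen {x : ℂ | ∃ lam ∈ spectrum ℂ H, dist (c + x) lam < η₁} := by
  have : {x : ℂ | ∃ lam ∈ spectrum ℂ H, dist (c + x) lam < η₁}
      = (fun x => c + x) ⁻¹' (⋃ lam ∈ spectrum ℂ H, Metric.ball lam η₁) := by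
    ext x; simp [Metric.mem_ball, add_comm]
  rw [this]
  exact (isOpen_biUnion fun lam _ => Metric.isOpen_ball).preimage (by continuity)

lemma bad_bound {n : ℕ} (H : Matrix (Fin n) (Fin n) ℂ) (hgap : 0 < gap H) (c : ℂ)
    (η₁ η₂ : ℝ) (h1 : 0 < η₁) (h12 : η₁ ≤ η₂) (hsum : η₁ + η₂ ≤ gap H / 2) :
    unifDisk η₂ {x : ℂ | ∃ lam ∈ spectrum ℂ H, dist (c + x) lam < η₁}
      ≤ ENNReal.ofReal ((η₁ / η₂) ^ 2) := by
  have h2 : 0 < η₂ := h1.trans_le h12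
  set S := {x : ℂ | ∃ lam ∈ spectrum ℂ H, dist (c + x) lam < η₁} with hS
  have key : ∀ B : Set ℂ, volume (S ∩ Metric.closedBall 0 η₂) ≤ ENNReal.ofReal η₁ ^ 2 * NNReal.pi := by
    intro _
    rcases Set.eq_empty_or_nonempty (S ∩ Metric.closedBall 0 η₂) with he | ⟨x₀, hx₀⟩
    · simp [he]
    · obtain ⟨⟨lam₀, hlam₀, hd₀⟩, hx₀b⟩ := hx₀
      have hsub : S ∩ Metric.closedBall 0 η₂ ⊆ Metric.ball (lam₀ - c) η₁ := by
        rintro x ⟨⟨lam, hlam, hd⟩, hxb⟩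
        have hlameq : lam = lam₀ := by
          by_contra hne
          have h1' : gap H ≤ dist lam lam₀ := gap_le H hlam hlam₀ hne
          have hq : dist lam lam₀ ≤
              dist lam (c + x) + (dist x 0 + dist 0 x₀) + dist (c + x₀) lam₀ := by
            calc dist lam lam₀ ≤ dist lam (c + x) + dist (c + x) (c + x₀) + dist (c + x₀) lam₀ :=
                  dist_triangle4 _ _ _ _
              _ ≤ dist lam (c + x) + (dist x 0 + dist 0 x₀) + dist (c + x₀) lam₀ := by
                  gcongr
                  calc dist (c + x) (c + x₀) = dist x x₀ := dist_add_left c x x₀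
                    _ ≤ dist x 0 + dist 0 x₀ := dist_triangle _ _ _
          have hb1 : dist x 0 ≤ η₂ := Metric.mem_closedBall.mp hxb
          have hb2 : dist 0 x₀ ≤ η₂ := by
            rw [dist_comm]; exact Metric.mem_closedBall.mp hx₀b
          rw [dist_comm] at hd
          linarith
        rw [hlameq] at hd
        have heq : dist (c + x) lam₀ = dist x (lam₀ - c) := by
          have h' : c + x - lam₀ = x - (lam₀ - c) := by ring
          rw [dist_eq_norm, dist_eq_norm, h']
        exact Metric.mem_ball.mpr (heq ▸ hd)
      calc volume (S ∩ Metric.closedBall 0 η₂) ≤ volume (Metric.ball (lam₀ - c) η₁) :=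
            measure_mono hsub
        _ = ENNReal.ofReal η₁ ^ 2 * NNReal.pi := Complex.volume_ball _ _
  have hval : unifDisk η₂ S = (ENNReal.ofReal η₂ ^ 2 * NNReal.pi)⁻¹
      * volume (S ∩ Metric.closedBall 0 η₂) := by
    rw [unifDisk, Measure.smul_apply, Measure.restrict_apply' measurableSet_closedBall,
      Complex.volume_closedBall, smul_eq_mul]
  rw [hval]
  have hπ0 : (NNReal.pi : ENNReal) ≠ 0 := by
    simp [NNReal.pi_ne_zero]
  have hπt : (NNReal.pi : ENNReal) ≠ ⊤ := ENNReal.coe_ne_top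
  have hA0 : (ENNReal.ofReal η₂ ^ 2 : ENNReal) ≠ 0 := by
    simp [pow_eq_zero_iff, ENNReal.ofReal_eq_zero]; linarith
  have hAt : (ENNReal.ofReal η₂ ^ 2 : ENNReal) ≠ ⊤ := by
    exact (ENNReal.pow_ne_top ENNReal.ofReal_ne_top)
  calc (ENNReal.ofReal η₂ ^ 2 * NNReal.pi)⁻¹ * volume (S ∩ Metric.closedBall 0 η₂)
      ≤ (ENNReal.ofReal η₂ ^ 2 * NNReal.pi)⁻¹ * (ENNReal.ofReal η₁ ^ 2 * NNReal.pi) := by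
        gcongr; exact key S
    _ = (ENNReal.ofReal η₂ ^ 2)⁻¹ * ENNReal.ofReal η₁ ^ 2 := by
        rw [ENNReal.mul_inv (Or.inl hA0) (Or.inl hAt)]
        rw [mul_comm (ENNReal.ofReal η₁ ^ 2) _, ← mul_assoc, mul_assoc _ (NNReal.pi : ENNReal)⁻¹,
          ENNReal.inv_mul_cancel hπ0 hπt, mul_one]
    _ = ENNReal.ofReal ((η₁ / η₂) ^ 2) := by
        rw [← ENNReal.ofReal_pow h1.le, ← ENNReal.ofReal_pow h2.le,
          div_pow, ENNReal.ofReal_div_of_pos (by positivity)]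
        rw [ENNReal.div_eq_inv_mul]

/-- Shift regularization: if `0 < η₁ ≤ η₂` and `η₁ + η₂ ≤ gap(H)/2`, and
`w₁, …, w_k` are i.i.d. uniform on the disk `D(0, η₂)`, then with probability at least
`1 - k (η₁/η₂)²` every perturbed shift `rᵢ + wᵢ` is at distance at least `η₁`
from the spectrum of `H`. -/
theorem stmt3 {n k : ℕ} (H : Matrix (Fin n) (Fin n) ℂ)
    (hgap : 0 < gap H) (r : Fin k → ℂ) (η₁ η₂ : ℝ)
    (h1 : 0 < η₁) (h12 : η₁ ≤ η₂) (hsum : η₁ + η₂ ≤ gap H / 2) :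
    ENNReal.ofReal (1 - k * (η₁ / η₂) ^ 2) ≤
      Measure.pi (fun _ : Fin k => unifDisk η₂)
        {w | ∀ i : Fin k, ∀ lam ∈ spectrum ℂ H, η₁ ≤ dist (r i + w i) lam} := by
  have h2 : 0 < η₂ := h1.trans_le h12
  haveI : IsProbabilityMeasure (unifDisk η₂) := ⟨unifDisk_univ η₂ h2⟩
  set muPi := Measure.pi (fun _ : Fin k => unifDisk η₂) with hmuPi
  haveI : IsProbabilityMeasure muPi := by infer_instance
  set S : Fin k → Set ℂ := fun i => {x : ℂ | ∃ lam ∈ spectrum ℂ H, dist (r i + x) lam < η₁}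
    with hSdef
  set G : Set (Fin k → ℂ) := {w | ∀ i : Fin k, ∀ lam ∈ spectrum ℂ H, η₁ ≤ dist (r i + w i) lam}
    with hGdef
  have hGc : Gᶜ = ⋃ i, Function.eval i ⁻¹' S i := by
    ext w
    simp only [hGdef, hSdef, Set.mem_compl_iff, Set.mem_setOf_eq, Set.mem_iUnion,
      Set.mem_preimage, Function.eval, not_forall, not_le]
    tauto
  have hSmeas : ∀ i, MeasurableSet (S i) := fun i => (isOpen_bad H (r i) η₁).measurableSet
  have hGmeas : MeasurableSet G := by
    have : G = (⋃ i, Function.eval i ⁻¹' S i)ᶜ := by rw [← hGc, compl_compl]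
    rw [this]
    exact (MeasurableSet.iUnion fun i => (hSmeas i).preimage (measurable_pi_apply i)).compl
  have heval : ∀ i, muPi (Function.eval i ⁻¹' S i) = unifDisk η₂ (S i) := by
    intro i
    classical
    rw [Set.eval_preimage, hmuPi, Measure.pi_pi]
    rw [Finset.prod_eq_single i]
    · simp
    · intro j _ hj; simp [Function.update_of_ne hj]
    · simp
  have hcompl : muPi Gᶜ ≤ k * ENNReal.ofReal ((η₁ / η₂) ^ 2) := by
    rw [hGc]
    calc muPi (⋃ i, Function.eval i ⁻¹' S i) ≤ ∑ i, muPi (Function.eval i ⁻¹' S i) :=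
          measure_iUnion_fintype_le _ _
      _ ≤ ∑ _i : Fin k, ENNReal.ofReal ((η₁ / η₂) ^ 2) := by
          gcongr with i
          rw [heval i]
          exact bad_bound H hgap (r i) η₁ η₂ h1 h12 hsum
      _ = k * ENNReal.ofReal ((η₁ / η₂) ^ 2) := by
          simp [Finset.sum_const, nsmul_eq_mul]
  have hGval : muPi G = 1 - muPi Gᶜ := by
    have h' := prob_compl_eq_one_sub (μ := muPi) hGmeas.compl
    rwa [compl_compl] at h'
  rw [hGval]
  have hk : (k : ENNReal) * ENNReal.ofReal ((η₁ / η₂) ^ 2)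
      = ENNReal.ofReal (k * (η₁ / η₂) ^ 2) := by
    rw [ENNReal.ofReal_mul (by positivity), ENNReal.ofReal_natCast]
  calc ENNReal.ofReal (1 - k * (η₁ / η₂) ^ 2)
      = ENNReal.ofReal 1 - ENNReal.ofReal (k * (η₁ / η₂) ^ 2) := by
        rw [ENNReal.ofReal_sub _ (by positivity)]
    _ ≤ 1 - muPi Gᶜ := by
        rw [ENNReal.ofReal_one, ← hk]
        exact tsub_le_tsub_left hcompl 1
end

section
/- Approximate functional calculus bounds: let $H \in \mathbb{C}^{n\times n}$ be diagonalizable as $H = VDV^{-1}$ with $\|V\| = \|V^{-1}\| = \sqrt{\kappa_V(H)}$, eigenvalues $\lambda_i = D_{ii}$, and let $Z_H$ be the random variable taking value $\lambda_i$ with probability $|e_n^* V e_i|^2 / \|e_n^* V\|^2$. Then for any function $f$ defined on $\mathrm{Spec}(H)$: $\|e_n^* f(H)\| / \kappa_V(H) \le \mathbb{E}[|f(Z_H)|^2]^{1/2} \le \kappa_V(H) \|e_n^* f(H)\|$, where $f(H) := V f(D) V^{-1}$ with $f(D)$ diagonal with entries $f(\lambda_i)$. -/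
open Matrix

/-- The spectral (ℓ² operator) norm of a complex matrix. -/
noncomputable def specNorm {m : Type*} [Fintype m] [DecidableEq m] (A : Matrix m m ℂ) : ℝ :=
  ‖Matrix.toEuclideanCLM (𝕜 := ℂ) A‖

/-- The probability that the spectral random variable `Z_H` equals the `i`-th eigenvalue:
`|eₙ* V eᵢ|² / ‖eₙ* V‖²`. -/
noncomputable def specWeight {n : ℕ} (V : Matrix (Fin (n + 1)) (Fin (n + 1)) ℂ)
    (i : Fin (n + 1)) : ℝ :=
  ‖V (Fin.last n) i‖ ^ 2 / ∑ j, ‖V (Fin.last n) j‖ ^ 2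

/-! With `r = ‖eₙ* V‖`, the expectation equals `‖eₙ* V f(D)‖ / r`. Right multiplication by `V`
or `V⁻¹` changes the norm of a row vector by a factor at most `√κ`; this compares
`‖eₙ* V f(D)‖` with `‖eₙ* f(H)‖ = ‖eₙ* V f(D) V⁻¹‖` in both directions, and applied to `eₙ* V`
and `eₙ* = eₙ* V V⁻¹` it gives `r ≤ √κ` and `1 ≤ r √κ`. -/

open scoped Matrix.Norms.L2Operator

lemma EuclideanSpace.norm_toLp_star {𝕜 ι : Type*} [RCLike 𝕜] [Fintype ι] (w : ι → 𝕜) :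
    ‖WithLp.toLp 2 (star w)‖ = ‖WithLp.toLp 2 w‖ := by
  simp only [EuclideanSpace.norm_eq, Pi.star_apply, RCLike.star_def, RCLike.norm_conj]

lemma Matrix.l2_opNorm_vecMul {𝕜 m n : Type*} [RCLike 𝕜] [Fintype m] [Fintype n]
    [DecidableEq m] [DecidableEq n] (v : m → 𝕜) (B : Matrix m n 𝕜) :
    ‖WithLp.toLp 2 (v ᵥ* B)‖ ≤ ‖WithLp.toLp 2 v‖ * ‖B‖ := by
  rw [← EuclideanSpace.norm_toLp_star, star_vecMul, ← l2_opNorm_conjTranspose B, mul_comm,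
    ← EuclideanSpace.norm_toLp_star v]
  exact l2_opNorm_mulVec Bᴴ (WithLp.toLp 2 (star v))

lemma specNorm_eq_l2_opNorm {m : Type*} [Fintype m] [DecidableEq m] (A : Matrix m m ℂ) :
    specNorm A = ‖A‖ :=
  rfl

lemma rowNorm_eq_norm_toLp {n : ℕ} (A : Matrix (Fin (n + 1)) (Fin (n + 1)) ℂ) :
    rowNorm A = ‖WithLp.toLp 2 (A (Fin.last n))‖ := by
  rw [EuclideanSpace.norm_eq]
  rfl

lemma rowNorm_mul_le {n : ℕ} (A B : Matrix (Fin (n + 1)) (Fin (n + 1)) ℂ) :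
    rowNorm (A * B) ≤ rowNorm A * specNorm B := by
  simpa only [rowNorm_eq_norm_toLp, specNorm_eq_l2_opNorm, mul_apply_eq_vecMul] using
    l2_opNorm_vecMul (A (Fin.last n)) B

lemma rowNorm_one {n : ℕ} : rowNorm (1 : Matrix (Fin (n + 1)) (Fin (n + 1)) ℂ) = 1 := by
  simp [rowNorm, one_apply, apply_ite (‖·‖)]

lemma sqrt_sum_specWeight_mul_sq_norm {n : ℕ} (V : Matrix (Fin (n + 1)) (Fin (n + 1)) ℂ)
    (g : Fin (n + 1) → ℂ) :
    √(∑ i, specWeight V i * ‖g i‖ ^ 2) = rowNorm (V * diagonal g) / rowNorm V := by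
  rw [rowNorm, rowNorm, ← Real.sqrt_div' _ (Finset.sum_nonneg fun _ _ => sq_nonneg _),
    Finset.sum_div]
  simp only [specWeight, mul_diagonal, norm_mul, mul_pow, div_mul_eq_mul_div]

theorem stmt4_general {n : ℕ} (V : Matrix (Fin (n + 1)) (Fin (n + 1)) ℂ)
    (d : Fin (n + 1) → ℂ) (hV : IsUnit V)
    (κ : ℝ) (hκ1 : specNorm V = Real.sqrt κ) (hκ2 : specNorm V⁻¹ = Real.sqrt κ)
    (f : ℂ → ℂ) :
    rowNorm (V * Matrix.diagonal (fun i => f (d i)) * V⁻¹) / κ ≤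
        Real.sqrt (∑ i, specWeight V i * ‖f (d i)‖ ^ 2) ∧
      Real.sqrt (∑ i, specWeight V i * ‖f (d i)‖ ^ 2) ≤
        κ * rowNorm (V * Matrix.diagonal (fun i => f (d i)) * V⁻¹) := by
  have hdet : IsUnit V.det := (isUnit_iff_isUnit_det V).mp hV
  set s := √κ
  set D := diagonal fun i => f (d i)
  set r := rowNorm V
  set N := rowNorm (V * D)
  set M := rowNorm (V * D * V⁻¹)
  have hr_le : r ≤ s := by
    simpa only [one_mul, rowNorm_one, hκ1] using rowNorm_mul_le 1 V
  have hrs : 1 ≤ r * s := by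
    simpa only [mul_nonsing_inv V hdet, rowNorm_one, hκ2] using rowNorm_mul_le V V⁻¹
  have hMN : M ≤ N * s := hκ2 ▸ rowNorm_mul_le (V * D) V⁻¹
  have hNM : N ≤ M * s := by
    simpa only [nonsing_inv_mul_cancel_right V (V * D) hdet, hκ1] using
      rowNorm_mul_le (V * D * V⁻¹) V
  have hr : 0 < r := pos_of_mul_pos_left (one_pos.trans_le hrs) (Real.sqrt_nonneg κ)
  have hs : 0 < s := hr.trans_le hr_le
  have hκ : κ = s * s := (Real.mul_self_sqrt (Real.sqrt_pos.mp hs).le).symm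
  have hN : 0 ≤ N := Real.sqrt_nonneg _
  rw [sqrt_sum_specWeight_mul_sq_norm, hκ]
  constructor
  · calc M / (s * s) ≤ N * s / (s * s) := by gcongr
      _ = N / s := by field_simp
      _ ≤ N / r := by gcongr
  · calc N / r ≤ N * s := by rw [div_le_iff₀ hr]; nlinarith
      _ ≤ M * s * s := by gcongr
      _ = s * s * M := by ring

/-- Approximate functional calculus: if `H = V D V⁻¹` with
`‖V‖ = ‖V⁻¹‖ = √κ_V(H)`, eigenvalues `λᵢ = Dᵢᵢ`, and `Z_H` takes value `λᵢ` with
probability `|eₙ* V eᵢ|²/‖eₙ* V‖²`, then for any `f`,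
`‖eₙ* f(H)‖/κ_V(H) ≤ E[|f(Z_H)|²]^{1/2} ≤ κ_V(H) ‖eₙ* f(H)‖`, where
`f(H) = V f(D) V⁻¹`. -/
theorem stmt4 {n : ℕ} (H V : Matrix (Fin (n + 1)) (Fin (n + 1)) ℂ)
    (d : Fin (n + 1) → ℂ) (hV : IsUnit V)
    (hdiag : H = V * Matrix.diagonal d * V⁻¹)
    (κ : ℝ) (hκ1 : specNorm V = Real.sqrt κ) (hκ2 : specNorm V⁻¹ = Real.sqrt κ)
    (f : ℂ → ℂ) :
    rowNorm (V * Matrix.diagonal (fun i => f (d i)) * V⁻¹) / κ ≤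
        Real.sqrt (∑ i, specWeight V i * ‖f (d i)‖ ^ 2) ∧
      Real.sqrt (∑ i, specWeight V i * ‖f (d i)‖ ^ 2) ≤
        κ * rowNorm (V * Matrix.diagonal (fun i => f (d i)) * V⁻¹) :=
  stmt4_general V d hV κ hκ1 hκ2 f
end

section
/- Let $M \in \mathbb{C}^{n\times n}$ have $n$ distinct eigenvalues, and let $E$ satisfy $\|E\| \le \mathrm{gap}(M) / (8 n^2 \kappa_V(M)^3)$. Then $\mathrm{gap}(M+E) \ge \mathrm{gap}(M) - 2\kappa_V(M)\|E\|$. -/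
/-!
Fix a diagonalization `M = V D V⁻¹`, `D = diagonal d`, and put `r = ‖V‖ ‖V⁻¹‖ ‖E‖`. By Bauer–Fike
every eigenvalue of `M + s E`, `0 ≤ s ≤ 1`, lies in one of the closed disks of radius `r` about
the `dᵢ`. When `2 r < gap M` these disks are separated by a root-free moat, so the number of roots
of the characteristic polynomial in each disk depends continuously, hence not at all, on `s`; at
`s = 0` it is `1`. So `M + E` has exactly one eigenvalue in each disk, and distinct eigenvalues lie
in distinct disks, at distance at least `gap M - 2 r`. Letting `‖V‖ ‖V⁻¹‖` decrease to `κ_V(M)`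
gives the claim.
-/

open Matrix

/-- Eigenvector condition number: the infimum of `‖V‖‖V⁻¹‖` over diagonalizing `V`. -/
noncomputable def kappaV {m : Type*} [Fintype m] [DecidableEq m] (M : Matrix m m ℂ) : ℝ :=
  sInf {c | ∃ V : Matrix m m ℂ, ∃ d : m → ℂ,
    IsUnit V ∧ M = V * Matrix.diagonal d * V⁻¹ ∧ c = specNorm V * specNorm V⁻¹}

open Polynomial Filter Topology

lemma Multiset.exists_eq_map_univ_fin {α : Type*} {s : Multiset α} {m : ℕ}
    (h : Multiset.card s = m) : ∃ g : Fin m → α, s = Finset.univ.val.map g := by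
  subst h
  refine ⟨fun i => s.toList.get (i.cast s.length_toList.symm), ?_⟩
  rw [Fin.univ_val_map, ← List.ofFn_congr s.length_toList, List.ofFn_get, Multiset.coe_toList]

lemma eq_of_dist_le_of_dist_le_of_dist_lt {ι α : Type*} [PseudoMetricSpace α] {d : ι → α}
    {r δ : ℝ} (hsep : ∀ i j, i ≠ j → 2 * r + δ ≤ dist (d i) (d j)) {i j : ι} {z w : α}
    (hz : dist z (d i) ≤ r) (hw : dist w (d j) ≤ r) (hzw : dist z w < δ) : i = j := by
  by_contra hij
  have := dist_triangle4 (d i) z w (d j)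
  linarith [hsep i j hij, dist_comm z (d i)]

section

variable {ι : Type*} [Fintype ι]

lemma injective_of_ncard_range_eq {α : Type*} {d : ι → α}
    (h : (Set.range d).ncard = Fintype.card ι) : Function.Injective d := by
  classical
  rw [← Set.image_univ, ← Finset.coe_univ, ← Finset.coe_image, Set.ncard_coe_finset,
    ← Finset.card_univ] at h
  exact fun i j hij => Finset.card_image_iff.1 h (Finset.mem_coe.2 (Finset.mem_univ i))
    (Finset.mem_coe.2 (Finset.mem_univ j)) hij

lemma mul_norm_le_norm_mul_of_le_norm {w : ι → ℂ} {a : ℝ} (ha : 0 ≤ a) (hw : ∀ i, a ≤ ‖w i‖)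
    (y : ι → ℂ) : a * ‖WithLp.toLp 2 y‖ ≤ ‖WithLp.toLp 2 (w * y)‖ := by
  refine (pow_le_pow_iff_left₀ (by positivity) (norm_nonneg _) two_ne_zero).1 ?_
  rw [mul_pow, EuclideanSpace.norm_sq_eq, EuclideanSpace.norm_sq_eq, Finset.mul_sum]
  gcongr with i
  simp only [Pi.mul_apply, norm_mul, mul_pow]
  gcongr
  exact hw i

variable [DecidableEq ι]

lemma specNorm_nonneg (A : Matrix ι ι ℂ) : 0 ≤ specNorm A := norm_nonneg _

lemma specNorm_eq_zero_iff {A : Matrix ι ι ℂ} : specNorm A = 0 ↔ A = 0 := by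
  rw [specNorm, norm_eq_zero, EmbeddingLike.map_eq_zero_iff]

lemma specNorm_mul_le (A B : Matrix ι ι ℂ) : specNorm (A * B) ≤ specNorm A * specNorm B := by
  rw [specNorm, map_mul]
  exact norm_mul_le _ _

lemma specNorm_smul (c : ℂ) (A : Matrix ι ι ℂ) : specNorm (c • A) = ‖c‖ * specNorm A := by
  rw [specNorm, map_smul, norm_smul, specNorm]

lemma specNorm_mulVec_le (A : Matrix ι ι ℂ) (v : ι → ℂ) :
    ‖WithLp.toLp 2 (A *ᵥ v)‖ ≤ specNorm A * ‖WithLp.toLp 2 v‖ :=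
  (toEuclideanCLM (𝕜 := ℂ) A).le_opNorm _

lemma mem_roots_charpoly_iff {K : Type*} [Field K] {A : Matrix ι ι K} {z : K} :
    z ∈ A.charpoly.roots ↔ z ∈ spectrum K A := by
  rw [mem_roots (charpoly_monic A).ne_zero, mem_spectrum_iff_isRoot_charpoly]

lemma spectrum_conj_diagonal {V : Matrix ι ι ℂ} (hV : IsUnit V) (d : ι → ℂ) :
    spectrum ℂ (V * diagonal d * V⁻¹) = Set.range d := by
  rw [← hV.unit_spec, ← coe_units_inv, spectrum.units_conjugate, spectrum_diagonal]

lemma roots_charpoly_conj_diagonal {V : Matrix ι ι ℂ} (hV : IsUnit V) (d : ι → ℂ) :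
    (V * diagonal d * V⁻¹).charpoly.roots = Finset.univ.val.map d := by
  rw [← hV.unit_spec, charpoly_units_conj, charpoly_diagonal,
    ← roots_multiset_prod_X_sub_C (Finset.univ.val.map d), Multiset.map_map]
  rfl

theorem exists_dist_le_of_mem_spectrum_diagonal_add {d : ι → ℂ} {G : Matrix ι ι ℂ} {z : ℂ}
    (hz : z ∈ spectrum ℂ (diagonal d + G)) : ∃ i, dist z (d i) ≤ specNorm G := by
  rw [← spectrum_toLin', ← Module.End.hasEigenvalue_iff_mem_spectrum] at hz
  obtain ⟨y, hy⟩ := hz.exists_hasEigenvector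
  have hy0 : WithLp.toLp 2 y ≠ 0 := by simpa using hy.2
  have : Nonempty ι := let ⟨j, _⟩ := Function.ne_iff.1 hy.2; ⟨j⟩
  obtain ⟨i, hi⟩ := Finite.exists_min fun j => ‖z - d j‖
  have hGy : G *ᵥ y = (fun j => z - d j) * y := by
    have h := hy.apply_eq_smul
    rw [toLin'_apply, add_mulVec] at h
    ext j
    have hj := congrFun h j
    simp only [Pi.add_apply, mulVec_diagonal, Pi.smul_apply, smul_eq_mul] at hj
    simp only [Pi.mul_apply]
    linear_combination hj
  refine ⟨i, le_of_mul_le_mul_right ?_ (norm_pos_iff.2 hy0)⟩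
  calc dist z (d i) * ‖WithLp.toLp 2 y‖
      ≤ ‖WithLp.toLp 2 ((fun j => z - d j) * y)‖ :=
        mul_norm_le_norm_mul_of_le_norm dist_nonneg (fun j => (dist_eq_norm _ _).trans_le (hi j)) y
    _ = ‖WithLp.toLp 2 (G *ᵥ y)‖ := by rw [hGy]
    _ ≤ specNorm G * ‖WithLp.toLp 2 y‖ := specNorm_mulVec_le G y

/-- The Bauer–Fike theorem. -/
theorem exists_dist_le_of_mem_spectrum_conj_diagonal_add {V F : Matrix ι ι ℂ} (hV : IsUnit V)
    {d : ι → ℂ} {z : ℂ} (hz : z ∈ spectrum ℂ (V * diagonal d * V⁻¹ + F)) :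
    ∃ i, dist z (d i) ≤ specNorm V * specNorm V⁻¹ * specNorm F := by
  obtain ⟨u, rfl⟩ := hV
  rw [← coe_units_inv] at hz ⊢
  have hconj : u⁻¹.val * (u.val * diagonal d * u⁻¹.val + F) * u.val
      = diagonal d + u⁻¹.val * F * u.val := by
    simp only [Matrix.mul_add, Matrix.add_mul, Matrix.mul_assoc, Units.inv_mul_cancel_left,
      Units.inv_mul, Matrix.mul_one]
  rw [← spectrum.units_conjugate' (u := u), hconj] at hz
  obtain ⟨i, hi⟩ := exists_dist_le_of_mem_spectrum_diagonal_add hz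
  refine ⟨i, hi.trans ?_⟩
  calc specNorm (u⁻¹.val * F * u.val) ≤ specNorm u⁻¹.val * specNorm F * specNorm u.val :=
        (specNorm_mul_le _ _).trans
          (mul_le_mul_of_nonneg_right (specNorm_mul_le _ _) (specNorm_nonneg _))
    _ = _ := by ring

lemma card_roots_charpoly (A : Matrix ι ι ℂ) : Multiset.card A.charpoly.roots = Fintype.card ι := by
  rw [IsAlgClosed.card_roots_eq_natDegree, charpoly_natDegree_eq_dim]

lemma roots_charpoly_eq_map_of_tendsto {m : ℕ} {A : ℕ → Matrix ι ι ℂ} {A₀ : Matrix ι ι ℂ}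
    {g : ℕ → Fin m → ℂ} {g₀ : Fin m → ℂ} (hA : Tendsto A atTop (𝓝 A₀))
    (hg : Tendsto g atTop (𝓝 g₀)) (hroots : ∀ k, (A k).charpoly.roots = Finset.univ.val.map (g k)) :
    A₀.charpoly.roots = Finset.univ.val.map g₀ := by
  have heval (B : Matrix ι ι ℂ) (z : ℂ) :
      B.charpoly.eval z = (B.charpoly.roots.map (z - ·)).prod :=
    (IsAlgClosed.splits _).eval_eq_prod_roots_of_monic (charpoly_monic B) z
  have hlim (z : ℂ) : A₀.charpoly.eval z = ∏ j, (z - g₀ j) := by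
    have hdet : Tendsto (fun k => (A k).charpoly.eval z) atTop (𝓝 (A₀.charpoly.eval z)) := by
      simp only [eval_charpoly]
      exact ((continuous_const.sub continuous_id).matrix_det.tendsto _).comp hA
    have hprod : Tendsto (fun k => (A k).charpoly.eval z) atTop (𝓝 (∏ j, (z - g₀ j))) := by
      simp only [heval, hroots, Multiset.map_map]
      exact tendsto_finsetProd _ fun j _ => tendsto_const_nhds.sub (tendsto_pi_nhds.1 hg j)
    exact tendsto_nhds_unique hdet hprod
  have hchar : A₀.charpoly = ((Finset.univ.val.map g₀).map fun a => X - C a).prod :=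
    Polynomial.funext fun z => by
      rw [hlim, eval_multiset_prod, Multiset.map_map, Multiset.map_map]
      simp [Finset.prod_eq_multiset_prod]
  rw [hchar, roots_multiset_prod_X_sub_C]

theorem continuous_card_filter_roots_charpoly {X : Type*} [TopologicalSpace X]
    [FirstCountableTopology X] {A : X → Matrix ι ι ℂ} (hA : Continuous A) {K : Set ℂ}
    {p : ℂ → Prop} [DecidablePred p] (hK : IsCompact K) (hspec : ∀ x, spectrum ℂ (A x) ⊆ K)
    {η : ℝ} (hη : 0 < η) (hp : ∀ z ∈ K, ∀ w ∈ K, dist z w < η → (p z ↔ p w)) :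
    Continuous fun x => Multiset.card ((A x).charpoly.roots.filter p) := by
  have hroots (x : X) (z : ℂ) (hz : z ∈ (A x).charpoly.roots) : z ∈ K :=
    hspec x (mem_roots_charpoly_iff.1 hz)
  refine continuous_iff_continuousAt.2 fun x => tendsto_of_subseq_tendsto fun u hu => ?_
  choose g hg using fun k => Multiset.exists_eq_map_univ_fin (card_roots_charpoly (A (u k)))
  have hgK (k : ℕ) : g k ∈ Set.univ.pi fun _ => K := fun j _ =>
    hroots _ _ (by rw [hg k]; exact Multiset.mem_map_of_mem _ (Finset.mem_univ_val _))
  obtain ⟨g₀, -, φ, hφ, hgφ⟩ := (isCompact_univ_pi fun _ => hK).tendsto_subseq hgK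
  have h₀ := roots_charpoly_eq_map_of_tendsto ((hA.tendsto x).comp (hu.comp hφ.tendsto_atTop))
    hgφ fun k => hg (φ k)
  have hclose : ∀ᶠ k in atTop, ∀ j, dist (g (φ k) j) (g₀ j) < η :=
    eventually_all.2 fun j => (tendsto_pi_nhds.1 hgφ j).eventually (Metric.ball_mem_nhds _ hη)
  refine ⟨φ, tendsto_const_nhds.congr' ?_⟩
  filter_upwards [hclose] with k hk
  simp only [Function.comp_apply, h₀, hg, Multiset.filter_map, Multiset.card_map]
  congr 1
  refine Multiset.filter_congr fun j _ => (hp _ ?_ _ ?_ (hk j)).symm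
  · exact hgK _ j (Set.mem_univ _)
  · exact hroots x _ (by rw [h₀]; exact Multiset.mem_map_of_mem _ (Finset.mem_univ_val _))

lemma gap_nonneg (A : Matrix ι ι ℂ) : 0 ≤ gap A :=
  Real.sInf_nonneg fun _ ⟨_, _, _, _, _, h⟩ => h ▸ dist_nonneg

lemma gap_le_dist {A : Matrix ι ι ℂ} {z w : ℂ} (hz : z ∈ spectrum ℂ A) (hw : w ∈ spectrum ℂ A)
    (hzw : z ≠ w) : gap A ≤ dist z w :=
  csInf_le ⟨0, fun _ ⟨_, _, _, _, _, h⟩ => h ▸ dist_nonneg⟩ ⟨z, hz, w, hw, hzw, rfl⟩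

lemma le_gap {A : Matrix ι ι ℂ} {b : ℝ} (hA : (spectrum ℂ A).Nontrivial)
    (h : ∀ z ∈ spectrum ℂ A, ∀ w ∈ spectrum ℂ A, z ≠ w → b ≤ dist z w) : b ≤ gap A := by
  obtain ⟨z, hz, w, hw, hzw⟩ := hA
  exact le_csInf ⟨_, z, hz, w, hw, hzw, rfl⟩ fun _ ⟨z, hz, w, hw, hzw, h'⟩ => h' ▸ h z hz w hw hzw

lemma spectrum_nontrivial_of_gap_pos {A : Matrix ι ι ℂ} (h : 0 < gap A) :
    (spectrum ℂ A).Nontrivial := by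
  by_contra hA
  have hempty : {d | ∃ z ∈ spectrum ℂ A, ∃ w ∈ spectrum ℂ A, z ≠ w ∧ d = dist z w} = ∅ :=
    Set.eq_empty_of_forall_notMem fun _ ⟨z, hz, w, hw, hzw, _⟩ => hA ⟨z, hz, w, hw, hzw⟩
  simp [gap, hempty] at h

theorem card_filter_roots_charpoly_add_eq_one {M E : Matrix ι ι ℂ} {d : ι → ℂ} {r δ : ℝ}
    (hM : M.charpoly.roots = Finset.univ.val.map d) (hr : 0 ≤ r) (hδ : 0 < δ)
    (hsep : ∀ i j, i ≠ j → 2 * r + δ ≤ dist (d i) (d j))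
    (hdisk : ∀ s ∈ Set.Icc (0 : ℝ) 1, ∀ z ∈ spectrum ℂ (M + (s : ℂ) • E), ∃ i, dist z (d i) ≤ r)
    (i : ι) :
    Multiset.card ((M + E).charpoly.roots.filter (fun z => dist z (d i) ≤ r)) = 1 := by
  let A : Set.Icc (0 : ℝ) 1 → Matrix ι ι ℂ := fun s => M + ((s : ℝ) : ℂ) • E
  have hA : Continuous A := by fun_prop
  have hspec (s) : spectrum ℂ (A s) ⊆ ⋃ j, Metric.closedBall (d j) r := fun z hz =>
    Set.mem_iUnion.2 (hdisk s s.2 z hz)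
  have hmoat : ∀ z ∈ ⋃ j, Metric.closedBall (d j) r, ∀ w ∈ ⋃ j, Metric.closedBall (d j) r,
      dist z w < δ → (dist z (d i) ≤ r ↔ dist w (d i) ≤ r) := by
    simp only [Set.mem_iUnion, Metric.mem_closedBall]
    rintro z ⟨j, hj⟩ w ⟨k, hk⟩ hzw
    obtain rfl := eq_of_dist_le_of_dist_le_of_dist_lt hsep hj hk hzw
    constructor <;> intro h
    · obtain rfl := eq_of_dist_le_of_dist_le_of_dist_lt hsep h hj (by simpa using hδ)
      exact hk
    · obtain rfl := eq_of_dist_le_of_dist_le_of_dist_lt hsep h hk (by simpa using hδ)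
      exact hj
  have hconst := (Subtype.preconnectedSpace isPreconnected_Icc).constant
    (continuous_card_filter_roots_charpoly hA
      (isCompact_iUnion fun j => isCompact_closedBall (d j) r) hspec hδ hmoat)
    (x := ⟨0, by simp⟩) (y := ⟨1, by simp⟩)
  have hdi (j : ι) : dist (d j) (d i) ≤ r ↔ j = i := by
    refine ⟨fun h => eq_of_dist_le_of_dist_le_of_dist_lt hsep ((dist_self _).trans_le hr) h
      (by simpa using hδ), fun h => h ▸ (dist_self _).trans_le hr⟩
  simp only [A, Complex.ofReal_zero, Complex.ofReal_one, zero_smul, one_smul, add_zero, hM,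
    Multiset.filter_map, Multiset.card_map] at hconst
  rw [← hconst, Multiset.filter_congr (p := (fun z => dist z (d i) ≤ r) ∘ d) fun j _ => hdi j,
    ← Finset.filter_val, Finset.filter_eq', if_pos (Finset.mem_univ i)]
  rfl

theorem le_gap_of_card_filter_roots_eq_one {A : Matrix ι ι ℂ} {d : ι → ℂ} {r δ : ℝ}
    [Nontrivial ι] (hδ : 0 < δ) (hsep : ∀ i j, i ≠ j → 2 * r + δ ≤ dist (d i) (d j))
    (hdisk : ∀ z ∈ spectrum ℂ A, ∃ i, dist z (d i) ≤ r)
    (hone : ∀ i, Multiset.card (A.charpoly.roots.filter (fun z => dist z (d i) ≤ r)) = 1) :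
    δ ≤ gap A := by
  choose μ hμ using fun i => Multiset.card_eq_one.1 (hone i)
  have hmem (i : ι) (z : ℂ) : z ∈ spectrum ℂ A ∧ dist z (d i) ≤ r ↔ z = μ i := by
    rw [← Multiset.mem_singleton, ← hμ i, Multiset.mem_filter, mem_roots_charpoly_iff]
  obtain ⟨i, j, hij⟩ := exists_pair_ne ι
  refine le_gap ⟨μ i, ((hmem i _).2 rfl).1, μ j, ((hmem j _).2 rfl).1, fun h => hij ?_⟩ ?_
  · exact eq_of_dist_le_of_dist_le_of_dist_lt hsep ((hmem i _).2 rfl).2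
      (h ▸ ((hmem j _).2 rfl).2) (by simpa using hδ)
  · intro z hz w hw hzw
    obtain ⟨k, hk⟩ := hdisk z hz
    obtain ⟨l, hl⟩ := hdisk w hw
    by_contra! hlt
    obtain rfl := eq_of_dist_le_of_dist_le_of_dist_lt hsep hk hl hlt
    exact hzw (((hmem k z).1 ⟨hz, hk⟩).trans ((hmem k w).1 ⟨hw, hl⟩).symm)

theorem gap_sub_le_gap_add_of_eq_conj_diagonal {M E V : Matrix ι ι ℂ} {d : ι → ℂ}
    (hV : IsUnit V) (hM : M = V * diagonal d * V⁻¹) (hd : Function.Injective d) :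
    gap M - 2 * (specNorm V * specNorm V⁻¹ * specNorm E) ≤ gap (M + E) := by
  set r := specNorm V * specNorm V⁻¹ * specNorm E
  have hc : 0 ≤ specNorm V * specNorm V⁻¹ := mul_nonneg (specNorm_nonneg V) (specNorm_nonneg _)
  have hr : 0 ≤ r := mul_nonneg hc (specNorm_nonneg E)
  rcases le_or_gt (gap M) (2 * r) with hle | hlt
  · linarith [gap_nonneg (M + E)]
  have hspec : spectrum ℂ M = Set.range d := hM ▸ spectrum_conj_diagonal hV d
  have hsep (i j : ι) (hij : i ≠ j) : 2 * r + (gap M - 2 * r) ≤ dist (d i) (d j) := by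
    simpa using gap_le_dist (hspec ▸ Set.mem_range_self i) (hspec ▸ Set.mem_range_self j)
      (hd.ne hij)
  have hdisk : ∀ s ∈ Set.Icc (0 : ℝ) 1, ∀ z ∈ spectrum ℂ (M + (s : ℂ) • E),
      ∃ i, dist z (d i) ≤ r := by
    intro s hs z hz
    rw [hM] at hz
    obtain ⟨i, hi⟩ := exists_dist_le_of_mem_spectrum_conj_diagonal_add hV hz
    refine ⟨i, hi.trans (mul_le_mul_of_nonneg_left ?_ hc)⟩
    rw [specNorm_smul, Complex.norm_real, Real.norm_of_nonneg hs.1]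
    exact mul_le_of_le_one_left (specNorm_nonneg E) hs.2
  obtain ⟨_, ⟨i, rfl⟩, _, ⟨j, rfl⟩, hij⟩ := hspec ▸ spectrum_nontrivial_of_gap_pos (by linarith)
  have : Nontrivial ι := ⟨i, j, ne_of_apply_ne d hij⟩
  have hone := card_filter_roots_charpoly_add_eq_one (hM ▸ roots_charpoly_conj_diagonal hV d) hr
    (by linarith) hsep hdisk
  have := le_gap_of_card_filter_roots_eq_one (by linarith) hsep
    (by simpa using hdisk 1 ⟨zero_le_one, le_rfl⟩) hone
  linarith

end

/-- If `M` has `n` distinct eigenvalues and `‖E‖ ≤ gap(M)/(8 n² κ_V(M)³)`, then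
`gap(M + E) ≥ gap(M) - 2 κ_V(M) ‖E‖`. -/
theorem stmt6 {n : ℕ} (M E : Matrix (Fin n) (Fin n) ℂ)
    (hdist : (spectrum ℂ M).ncard = n)
    (hE : specNorm E ≤ gap M / (8 * (n : ℝ) ^ 2 * kappaV M ^ 3)) :
    gap M - 2 * kappaV M * specNorm E ≤ gap (M + E) := by
  set C := {c | ∃ V : Matrix (Fin n) (Fin n) ℂ, ∃ d : Fin n → ℂ,
    IsUnit V ∧ M = V * Matrix.diagonal d * V⁻¹ ∧ c = specNorm V * specNorm V⁻¹}
  have hκ : kappaV M = sInf C := rfl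
  rcases C.eq_empty_or_nonempty with hC | hC
  · rw [hκ, hC, Real.sInf_empty] at hE ⊢
    have hE0 : E = 0 := specNorm_eq_zero_iff.1 (le_antisymm (by simpa using hE) (specNorm_nonneg E))
    simp [hE0]
  have hbound : ∀ c ∈ C, gap M - 2 * c * specNorm E ≤ gap (M + E) := by
    rintro _ ⟨V, d, hV, hM, rfl⟩
    have hd := injective_of_ncard_range_eq (d := d) (by
      rwa [← spectrum_conj_diagonal hV, ← hM, Fintype.card_fin])
    linarith [gap_sub_le_gap_add_of_eq_conj_diagonal (E := E) hV hM hd]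
  have hanti : Antitone fun c => gap M - 2 * c * specNorm E := fun a b hab => by
    dsimp only
    nlinarith [specNorm_nonneg E]
  have hbdd : BddBelow C :=
    ⟨0, fun _ ⟨V, _, _, _, h⟩ => h ▸ mul_nonneg (specNorm_nonneg V) (specNorm_nonneg _)⟩
  rw [hκ, hanti.map_csInf_of_continuousAt (by fun_prop) hC hbdd]
  exact csSup_le (hC.image _) (Set.forall_mem_image.2 hbound)
end

section
/- If $M$ is a block upper triangular complex matrix and $M'$ is one of its diagonal blocks, then $\mathrm{gap}(M') \ge \mathrm{gap}(M)$ and, if $M$ is diagonalizable, $\kappa_V(M') \le \kappa_V(M)$. -/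
/-!
The eigenvalues of a diagonal block are roots of the characteristic polynomial of `M`, which is
the product of the characteristic polynomials of the blocks; this gives the gap inequalities.

For the condition numbers, let `J` have orthonormal columns with `M J = J A`: the first coordinate
vectors for the top-left block, and the last ones for `Mᴴ` and the bottom-right block. If
`M = V D V⁻¹` with `D` diagonal, the range of `X = V⁻¹ J` is `D`-invariant, hence the direct sum
of its intersections with the eigenspaces of `D`, which are coordinate subspaces and so mutually
orthogonal. It therefore has an orthonormal basis `Z` of eigenvectors of `D`. Writing `Z = X C`,
the matrix `C = Jᴴ V Z` diagonalizes `A` and has inverse `Zᴴ V⁻¹ J`; as `J` and `Z` are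
isometries, `‖C‖ ≤ ‖V‖` and `‖C⁻¹‖ ≤ ‖V⁻¹‖`.
-/

open Matrix

/-- Minimum eigenvalue gap, valued in `ℝ≥0∞` (equal to `∞` when there is at most one
distinct eigenvalue). -/
noncomputable def egap {m : Type*} [Fintype m] [DecidableEq m] (M : Matrix m m ℂ) : ENNReal :=
  ⨅ (lam ∈ spectrum ℂ M) (mu ∈ spectrum ℂ M) (_ : lam ≠ mu), edist lam mu

/-- A matrix is diagonalizable if it is conjugate to a diagonal matrix. -/
def Diagonalizable {m : Type*} [Fintype m] [DecidableEq m] (M : Matrix m m ℂ) : Prop :=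
  ∃ V : Matrix m m ℂ, ∃ d : m → ℂ, IsUnit V ∧ M = V * Matrix.diagonal d * V⁻¹

open Module End
open scoped Matrix.Norms.L2Operator

namespace Module.End

variable {𝕜 E : Type*} [RCLike 𝕜] [NormedAddCommGroup E] [InnerProductSpace 𝕜 E]
  [FiniteDimensional 𝕜 E]

theorem exists_orthonormalBasis_eigenvectors (f : End 𝕜 E) (hspan : ⨆ μ, f.eigenspace μ = ⊤)
    (horth : OrthogonalFamily 𝕜 (fun μ => f.eigenspace μ) fun μ => (f.eigenspace μ).subtypeₗᵢ) :
    ∃ (b : OrthonormalBasis (Fin (finrank 𝕜 E)) 𝕜 E) (e : Fin (finrank 𝕜 E) → 𝕜),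
      ∀ j, f (b j) = e j • b j := by
  classical
  -- `subordinateOrthonormalBasis` needs a finite index type, so index by the eigenvalues only.
  have horth' : OrthogonalFamily 𝕜 (fun μ : Eigenvalues f => f.eigenspace μ)
      fun μ => (f.eigenspace μ).subtypeₗᵢ := horth.comp Subtype.coe_injective
  have hint : DirectSum.IsInternal fun μ : Eigenvalues f => f.eigenspace μ := by
    refine horth'.isInternal_iff.mpr ?_
    have : ⨆ μ : Eigenvalues f, f.eigenspace μ = ⊤ :=
      (iSup_ne_bot_subtype (fun μ => f.eigenspace μ)).trans hspan
    rw [this, Submodule.top_orthogonal_eq_bot]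
  refine ⟨hint.subordinateOrthonormalBasis rfl horth',
    fun j => (hint.subordinateOrthonormalBasisIndex rfl j horth' : Eigenvalues f), fun j => ?_⟩
  exact mem_eigenspace_iff.mp (hint.subordinateOrthonormalBasis_subordinate rfl j horth')

theorem exists_orthonormalBasis_eigenvectors_of_invariant (f : End 𝕜 E)
    (hspan : ⨆ μ, f.eigenspace μ = ⊤)
    (horth : OrthogonalFamily 𝕜 (fun μ => f.eigenspace μ) fun μ => (f.eigenspace μ).subtypeₗᵢ)
    {p : Submodule 𝕜 E} (hp : ∀ x ∈ p, f x ∈ p) :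
    ∃ (b : OrthonormalBasis (Fin (finrank 𝕜 p)) 𝕜 p) (e : Fin (finrank 𝕜 p) → 𝕜),
      ∀ j, f (b j) = e j • (b j : E) := by
  have hmem : ∀ μ (x : p), x ∈ eigenspace (f.restrict hp) μ → (x : E) ∈ f.eigenspace μ :=
    fun μ x hx => mem_eigenspace_iff.mpr (congrArg Subtype.val (mem_eigenspace_iff.mp hx) :)
  obtain ⟨b, e, hb⟩ := exists_orthonormalBasis_eigenvectors (f.restrict hp)
    (genEigenspace_restrict_eq_top hp hspan)
    (fun μ ν hμν x y => horth hμν ⟨x, hmem μ x x.2⟩ ⟨y, hmem ν y y.2⟩)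
  exact ⟨b, e, fun j => congrArg Subtype.val (hb j)⟩

end Module.End

namespace Matrix

section Diagonal

variable {𝕜 n : Type*} [RCLike 𝕜] [Fintype n] [DecidableEq n]

theorem iSup_eigenspace_toEuclideanLin_diagonal_eq_top (d : n → 𝕜) :
    ⨆ μ, eigenspace (toEuclideanLin (diagonal d)) μ = ⊤ := by
  rw [toEuclideanLin_eq_toLin_orthonormal]
  exact iSup_eigenspace_toLin_diagonal_eq_top d _

theorem eq_zero_of_mem_eigenspace_toEuclideanLin_diagonal {d : n → 𝕜} {μ : 𝕜}
    {x : EuclideanSpace 𝕜 n} (hx : x ∈ eigenspace (toEuclideanLin (diagonal d)) μ) {i : n}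
    (hi : d i ≠ μ) : x i = 0 := by
  have hxi : d i * x i = μ * x i := by
    simpa [ofLp_toLpLin, mulVec_diagonal] using congrArg (· i) (mem_eigenspace_iff.mp hx)
  exact (mul_eq_mul_right_iff.mp hxi).resolve_left hi

theorem orthogonalFamily_eigenspace_toEuclideanLin_diagonal (d : n → 𝕜) :
    OrthogonalFamily 𝕜 (fun μ => eigenspace (toEuclideanLin (diagonal d)) μ)
      fun μ => (eigenspace (toEuclideanLin (diagonal d)) μ).subtypeₗᵢ := by
  rintro μ ν hμν ⟨x, hx⟩ ⟨y, hy⟩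
  refine Finset.sum_eq_zero fun i _ => ?_
  by_cases hi : d i = μ
  · simp [eq_zero_of_mem_eigenspace_toEuclideanLin_diagonal hy (hi ▸ hμν)]
  · simp [eq_zero_of_mem_eigenspace_toEuclideanLin_diagonal hx hi]

end Diagonal

section Isometry

variable {𝕜 m n : Type*} [RCLike 𝕜] [Fintype m] [Fintype n] [DecidableEq n]

theorem l2_opNorm_le_one_of_conjTranspose_mul_self_eq_one {J : Matrix m n 𝕜}
    (hJ : Jᴴ * J = 1) : ‖J‖ ≤ 1 := by
  have hone : ‖(1 : Matrix n n 𝕜)‖ ≤ 1 := by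
    rw [cstar_norm_def, map_one, ContinuousLinearMap.one_def]
    exact ContinuousLinearMap.norm_id_le
  have hsq : ‖J‖ * ‖J‖ ≤ 1 := by rwa [← l2_opNorm_conjTranspose_mul_self, hJ]
  nlinarith [norm_nonneg J]

theorem l2_opNorm_conjTranspose_mul_mul_le [DecidableEq m] {P Q : Matrix m n 𝕜}
    (hP : Pᴴ * P = 1) (hQ : Qᴴ * Q = 1) (N : Matrix m m 𝕜) : ‖Pᴴ * N * Q‖ ≤ ‖N‖ := by
  have hP' := l2_opNorm_le_one_of_conjTranspose_mul_self_eq_one hP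
  have hQ' := l2_opNorm_le_one_of_conjTranspose_mul_self_eq_one hQ
  calc ‖Pᴴ * N * Q‖ ≤ ‖Pᴴ‖ * ‖N‖ * ‖Q‖ :=
        (l2_opNorm_mul _ _).trans (by gcongr; exact l2_opNorm_mul _ _)
    _ ≤ 1 * ‖N‖ * 1 := by rw [l2_opNorm_conjTranspose]; gcongr
    _ = ‖N‖ := by ring

end Isometry

section Diagonalization

variable {𝕜 ι κ : Type*} [RCLike 𝕜] [Fintype ι] [DecidableEq ι] [Fintype κ] [DecidableEq κ]

theorem exists_isometry_eigenvectors_of_diagonal_mul_eq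
    (d : ι → 𝕜) (X : Matrix ι κ 𝕜) (A : Matrix κ κ 𝕜) (hX : Function.Injective X.mulVec)
    (hXA : diagonal d * X = X * A) :
    ∃ (Z : Matrix ι κ 𝕜) (e : κ → 𝕜) (C : Matrix κ κ 𝕜),
      Zᴴ * Z = 1 ∧ diagonal d * Z = Z * diagonal e ∧ Z = X * C := by
  set R := LinearMap.range (toEuclideanLin X)
  have hR : ∀ x ∈ R, toEuclideanLin (diagonal d) x ∈ R := by
    rintro _ ⟨u, rfl⟩
    exact ⟨toEuclideanLin A u, by ext; simp [ofLp_toLpLin, mulVec_mulVec, hXA]⟩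
  have hrank : Fintype.card κ = finrank 𝕜 R := by
    rw [LinearMap.finrank_range_of_inj, finrank_euclideanSpace]
    exact fun u v huv => WithLp.ofLp_injective 2 (hX (congrArg WithLp.ofLp huv))
  obtain ⟨b, e, hb⟩ := exists_orthonormalBasis_eigenvectors_of_invariant _
    (iSup_eigenspace_toEuclideanLin_diagonal_eq_top d)
    (orthogonalFamily_eigenspace_toEuclideanLin_diagonal d) hR
  set σ := Fintype.equivFinOfCardEq hrank
  set v : κ → EuclideanSpace 𝕜 ι := fun j => b (σ j)
  have hv : Orthonormal 𝕜 v := (b.orthonormal.comp_linearIsometry R.subtypeₗᵢ).comp σ σ.injective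
  choose u hu using fun j => (b (σ j)).2
  refine ⟨of fun i j => v j i, e ∘ σ, of fun k j => u j k, ?_, ?_, ?_⟩
  · rw [← gram_eq_one_iff_orthonormal.mpr hv,
      gram_eq_conjTranspose_mul (EuclideanSpace.basisFun ι 𝕜)]
    rfl
  · ext i j
    have h := congrArg (fun x : EuclideanSpace 𝕜 ι => x i) (hb (σ j))
    simp only [ofLp_toLpLin, toLin'_apply, mulVec_diagonal, WithLp.ofLp_smul, Pi.smul_apply,
      smul_eq_mul] at h
    simp only [diagonal_mul, mul_diagonal, of_apply, Function.comp_apply]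
    rw [h, mul_comm]
  · ext i j
    change (b (σ j) : EuclideanSpace 𝕜 ι) i = _
    rw [← hu j]
    rfl

theorem exists_diagonalization_of_isometry_intertwining {M : Matrix ι ι 𝕜} {A : Matrix κ κ 𝕜}
    {J : Matrix ι κ 𝕜} (hJ : Jᴴ * J = 1) (hMJ : M * J = J * A) {V : Matrix ι ι 𝕜}
    {d : ι → 𝕜} (hV : IsUnit V) (hM : M = V * diagonal d * V⁻¹) :
    ∃ (W : Matrix κ κ 𝕜) (e : κ → 𝕜),
      IsUnit W ∧ A = W * diagonal e * W⁻¹ ∧ ‖W‖ * ‖W⁻¹‖ ≤ ‖V‖ * ‖V⁻¹‖ := by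
  have hVdet := (isUnit_iff_isUnit_det V).mp hV
  set X := V⁻¹ * J with hXdef
  have hVX : V * X = J := by
    rw [hXdef, ← Matrix.mul_assoc, mul_nonsing_inv V hVdet, Matrix.one_mul]
  have hYX : Jᴴ * V * X = 1 := by rw [Matrix.mul_assoc, hVX, hJ]
  have hXA : diagonal d * X = X * A := by
    rw [hXdef, Matrix.mul_assoc, ← hMJ, hM]
    simp only [← Matrix.mul_assoc, nonsing_inv_mul V hVdet, Matrix.one_mul]
  have hXinj : Function.Injective X.mulVec := fun u v huv => by
    simpa [mulVec_mulVec, hYX] using congrArg (Jᴴ * V).mulVec huv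
  obtain ⟨Z, e, C, hZ, hdZ, hZC⟩ :=
    exists_isometry_eigenvectors_of_diagonal_mul_eq d X A hXinj hXA
  have hJC : J * C = V * Z := by rw [← hVX, Matrix.mul_assoc, ← hZC]
  have hC : C = Jᴴ * V * Z := by
    rw [Matrix.mul_assoc, ← hJC, ← Matrix.mul_assoc, hJ, Matrix.one_mul]
  have hleft : Zᴴ * V⁻¹ * J * C = 1 := by
    rw [Matrix.mul_assoc, hJC, ← Matrix.mul_assoc, Matrix.mul_assoc Zᴴ, nonsing_inv_mul V hVdet,
      Matrix.mul_one, hZ]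
  have hAC : A * C = C * diagonal e := by
    calc A * C = Jᴴ * V * X * (A * C) := by rw [hYX, Matrix.one_mul]
      _ = Jᴴ * V * (X * A * C) := by simp only [Matrix.mul_assoc]
      _ = Jᴴ * V * (diagonal d * Z) := by rw [← hXA, hZC, Matrix.mul_assoc (diagonal d)]
      _ = Jᴴ * V * X * C * diagonal e := by rw [hdZ, hZC]; simp only [Matrix.mul_assoc]
      _ = C * diagonal e := by rw [hYX, Matrix.one_mul]
  have hCdet : IsUnit C.det := isUnit_det_of_left_inverse hleft
  refine ⟨C, e, (isUnit_iff_isUnit_det C).mpr hCdet, ?_, ?_⟩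
  · rw [← hAC, Matrix.mul_assoc, mul_nonsing_inv C hCdet, Matrix.mul_one]
  · rw [inv_eq_left_inv hleft]
    nth_rw 1 [hC]
    exact mul_le_mul (l2_opNorm_conjTranspose_mul_mul_le hJ hZ V)
      (l2_opNorm_conjTranspose_mul_mul_le hZ hJ V⁻¹) (norm_nonneg _) (norm_nonneg _)

end Diagonalization

theorem spectrum_subset_spectrum_fromBlocks_zero₂₁_left {K m n : Type*} [Field K]
    [Fintype m] [DecidableEq m] [Fintype n] [DecidableEq n] (A : Matrix m m K)
    (B : Matrix m n K) (D : Matrix n n K) : spectrum K A ⊆ spectrum K (fromBlocks A B 0 D) := by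
  intro μ hμ
  rw [mem_spectrum_iff_isRoot_charpoly, charpoly_fromBlocks_zero₂₁] at *
  exact Polynomial.root_mul_right_of_isRoot _ hμ

theorem spectrum_subset_spectrum_fromBlocks_zero₂₁_right {K m n : Type*} [Field K]
    [Fintype m] [DecidableEq m] [Fintype n] [DecidableEq n] (A : Matrix m m K)
    (B : Matrix m n K) (D : Matrix n n K) : spectrum K D ⊆ spectrum K (fromBlocks A B 0 D) := by
  intro μ hμ
  rw [mem_spectrum_iff_isRoot_charpoly, charpoly_fromBlocks_zero₂₁] at *
  exact Polynomial.root_mul_left_of_isRoot _ hμ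

end Matrix

section ConditionNumber

variable {m n : Type*} [Fintype m] [DecidableEq m] [Fintype n] [DecidableEq n]

theorem egap_le_egap_of_spectrum_subset {M : Matrix m m ℂ} {A : Matrix n n ℂ}
    (h : spectrum ℂ A ⊆ spectrum ℂ M) : egap M ≤ egap A :=
  le_iInf₂ fun lam hlam => le_iInf₂ fun mu hmu => le_iInf fun hne =>
    iInf₂_le_of_le lam (h hlam) (iInf₂_le_of_le mu (h hmu) (iInf_le _ hne))

theorem kappaV_le_kappaV_of_forall {M : Matrix m m ℂ} {A : Matrix n n ℂ} (hM : Diagonalizable M)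
    (h : ∀ (V : Matrix m m ℂ) (d : m → ℂ), IsUnit V → M = V * diagonal d * V⁻¹ →
      ∃ (W : Matrix n n ℂ) (e : n → ℂ), IsUnit W ∧ A = W * diagonal e * W⁻¹ ∧
        specNorm W * specNorm W⁻¹ ≤ specNorm V * specNorm V⁻¹) :
    kappaV A ≤ kappaV M := by
  obtain ⟨V₀, d₀, hV₀, hM₀⟩ := hM
  unfold kappaV
  apply le_csInf
  · exact ⟨_, V₀, d₀, hV₀, hM₀, rfl⟩
  rintro _ ⟨V, d, hV, hMV, rfl⟩
  obtain ⟨W, e, hW, hAW, hle⟩ := h V d hV hMV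
  refine le_trans (csInf_le ⟨0, ?_⟩ ?_) hle
  · rintro _ ⟨W', -, -, -, rfl⟩
    exact mul_nonneg (norm_nonneg _) (norm_nonneg _)
  · exact ⟨W, e, hW, hAW, rfl⟩

theorem kappaV_le_of_isometry_intertwining {M : Matrix m m ℂ} {A : Matrix n n ℂ}
    {J : Matrix m n ℂ} (hJ : Jᴴ * J = 1) (hMJ : M * J = J * A) (hM : Diagonalizable M) :
    kappaV A ≤ kappaV M :=
  kappaV_le_kappaV_of_forall hM fun _ _ hV hMV =>
    exists_diagonalization_of_isometry_intertwining hJ hMJ hV hMV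

theorem conjTranspose_diagonalization {M V : Matrix m m ℂ} {d : m → ℂ} (hV : IsUnit V)
    (hM : M = V * diagonal d * V⁻¹) :
    IsUnit (Vᴴ)⁻¹ ∧ Mᴴ = (Vᴴ)⁻¹ * diagonal (star d) * (Vᴴ)⁻¹⁻¹ ∧
      specNorm (Vᴴ)⁻¹ * specNorm (Vᴴ)⁻¹⁻¹ = specNorm V * specNorm V⁻¹ := by
  have hVH : IsUnit Vᴴ := (isUnit_iff_isUnit_det _).mpr
    (by rw [det_conjTranspose]; exact ((isUnit_iff_isUnit_det V).mp hV).star)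
  rw [nonsing_inv_nonsing_inv _ ((isUnit_iff_isUnit_det _).mp hVH)]
  refine ⟨isUnit_nonsing_inv_iff.mpr hVH, ?_, ?_⟩
  · rw [hM, conjTranspose_mul, conjTranspose_mul, diagonal_conjTranspose,
      conjTranspose_nonsing_inv, Matrix.mul_assoc]
  · rw [← conjTranspose_nonsing_inv, mul_comm]
    exact congrArg₂ (· * ·) (l2_opNorm_conjTranspose V) (l2_opNorm_conjTranspose V⁻¹)

theorem Diagonalizable.conjTranspose {M : Matrix m m ℂ} (hM : Diagonalizable M) :
    Diagonalizable Mᴴ := by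
  obtain ⟨V, d, hV, hMV⟩ := hM
  obtain ⟨hU, hMU, -⟩ := conjTranspose_diagonalization hV hMV
  exact ⟨_, _, hU, hMU⟩

theorem kappaV_conjTranspose (M : Matrix m m ℂ) : kappaV Mᴴ = kappaV M := by
  have key : ∀ N : Matrix m m ℂ,
      {c | ∃ V d, IsUnit V ∧ N = V * diagonal d * V⁻¹ ∧ c = specNorm V * specNorm V⁻¹} ⊆
      {c | ∃ V d, IsUnit V ∧ Nᴴ = V * diagonal d * V⁻¹ ∧ c = specNorm V * specNorm V⁻¹} := by
    rintro N _ ⟨V, d, hV, hNV, rfl⟩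
    obtain ⟨hU, hNU, hc⟩ := conjTranspose_diagonalization hV hNV
    exact ⟨_, _, hU, hNU, hc.symm⟩
  have := key Mᴴ
  rw [conjTranspose_conjTranspose] at this
  exact congrArg sInf (this.antisymm (key M))

end ConditionNumber

/-- For a block upper triangular matrix `M` with diagonal blocks `A` and `D`:
`gap(A), gap(D) ≥ gap(M)`, and if `M` is diagonalizable then
`κ_V(A), κ_V(D) ≤ κ_V(M)`. -/
theorem stmt7 {p q : ℕ} (A : Matrix (Fin p) (Fin p) ℂ) (B : Matrix (Fin p) (Fin q) ℂ)
    (D : Matrix (Fin q) (Fin q) ℂ) :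
    egap (Matrix.fromBlocks A B 0 D) ≤ egap A ∧
      egap (Matrix.fromBlocks A B 0 D) ≤ egap D ∧
      (Diagonalizable (Matrix.fromBlocks A B 0 D) →
        kappaV A ≤ kappaV (Matrix.fromBlocks A B 0 D) ∧
          kappaV D ≤ kappaV (Matrix.fromBlocks A B 0 D)) := by
  refine ⟨egap_le_egap_of_spectrum_subset (spectrum_subset_spectrum_fromBlocks_zero₂₁_left A B D),
    egap_le_egap_of_spectrum_subset (spectrum_subset_spectrum_fromBlocks_zero₂₁_right A B D),
    fun hM => ⟨?_, ?_⟩⟩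
  · refine kappaV_le_of_isometry_intertwining (J := fromRows 1 0) ?_ ?_ hM
    · simp [conjTranspose_fromRows_eq_fromCols_conjTranspose, fromCols_mul_fromRows]
    · simp [fromBlocks_mul_fromRows, fromRows_mul]
  · calc kappaV D = kappaV Dᴴ := (kappaV_conjTranspose D).symm
      _ ≤ kappaV (fromBlocks A B 0 D)ᴴ := by
        refine kappaV_le_of_isometry_intertwining (J := fromRows 0 1) ?_ ?_ hM.conjTranspose
        · simp [conjTranspose_fromRows_eq_fromCols_conjTranspose, fromCols_mul_fromRows]
        · simp [fromBlocks_conjTranspose, fromBlocks_mul_fromRows, fromRows_mul]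
      _ = kappaV (fromBlocks A B 0 D) := kappaV_conjTranspose _
end

section
/- Let $Z$ be a random variable supported on the finite set $\mathrm{Spec}(H) \subset D(0,\|H\|) \subset \mathbb{C}$, let $q(z) = \prod_{i=1}^k (z - s_i)$ with all $s_i \in D(0,\|H\|)$, and let $\check{q}(z) = \prod_{i=1}^k (z - \check{s}_i)$ with $|s_i - \check{s}_i| \le \beta$ for all $i$. Assume $\beta/c \le \mathrm{gap}(H)$ for some $0 < c \le 1/2$. Then $\Pr[\mathrm{dist}(Z, \{s_1,\dots,s_k\}) \le \beta/(2c)] \ge \frac{\mathbb{E}[|\check{q}(Z)|^2] - (1+2c)^{2k}\,\mathbb{E}[|q(Z)|^2]}{(2(\|H\|+\beta)(1+2c))^{2k}}$. -/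
open Matrix MeasureTheory

/-!
Where `Z` is farther than `β / (2c)` from every root `sᵢ`, each factor obeys
`|Z - šᵢ| ≤ |Z - sᵢ| + β ≤ (1 + 2c) |Z - sᵢ|`, so `|q̌(Z)|² ≤ (1 + 2c)^{2k} |q(Z)|²`.
Everywhere else `|q̌(Z)|² ≤ (2(‖H‖ + β)(1 + 2c))^{2k}`, since all points lie in the
disc of radius `‖H‖` and the `šᵢ` within `β` of it. Integrating this pointwise
dichotomy bounds `E|q̌(Z)|²` by `(1 + 2c)^{2k} E|q(Z)|²` plus that constant times the
probability of the near event.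
-/

section Pointwise

variable {E ι : Type*} [SeminormedAddCommGroup E] [Fintype ι]

lemma norm_sub_le_one_add_mul_of_lt_dist {z s s' : E} {β t : ℝ} (ht : 0 < t)
    (hβ : ‖s - s'‖ ≤ β) (hfar : β / t < dist z s) :
    ‖z - s'‖ ≤ (1 + t) * ‖z - s‖ := by
  rw [div_lt_iff₀ ht, dist_eq_norm] at hfar
  calc ‖z - s'‖ ≤ ‖z - s‖ + ‖s - s'‖ := norm_sub_le_norm_sub_add_norm_sub z s s'
    _ ≤ (1 + t) * ‖z - s‖ := by linarith

lemma prod_norm_sub_sq_le_of_lt_dist {z : E} {s s' : ι → E} {β t : ℝ} (ht : 0 < t)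
    (hβ : ∀ i, ‖s i - s' i‖ ≤ β) (hfar : ∀ i, β / t < dist z (s i)) :
    ∏ i, ‖z - s' i‖ ^ 2 ≤ (1 + t) ^ (2 * Fintype.card ι) * ∏ i, ‖z - s i‖ ^ 2 := by
  calc ∏ i, ‖z - s' i‖ ^ 2 ≤ ∏ i, ((1 + t) * ‖z - s i‖) ^ 2 :=
        Finset.prod_le_prod (fun i _ => sq_nonneg _) fun i _ =>
          pow_le_pow_left₀ (norm_nonneg _)
            (norm_sub_le_one_add_mul_of_lt_dist ht (hβ i) (hfar i)) 2
    _ = (1 + t) ^ (2 * Fintype.card ι) * ∏ i, ‖z - s i‖ ^ 2 := by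
        simp only [mul_pow, Finset.prod_mul_distrib, Finset.prod_const, Finset.card_univ,
          pow_mul]

lemma prod_norm_sub_sq_le_pow {z : E} {s : ι → E} {D : ℝ} (hD : ∀ i, ‖z - s i‖ ≤ D) :
    ∏ i, ‖z - s i‖ ^ 2 ≤ D ^ (2 * Fintype.card ι) := by
  calc ∏ i, ‖z - s i‖ ^ 2 ≤ ∏ _i : ι, D ^ 2 :=
        Finset.prod_le_prod (fun i _ => sq_nonneg _) fun i _ =>
          pow_le_pow_left₀ (norm_nonneg _) (hD i) 2
    _ = D ^ (2 * Fintype.card ι) := by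
        rw [Finset.prod_const, Finset.card_univ, pow_mul]

lemma prod_norm_sub_sq_le_add_indicator {z : E} {s s' : ι → E} {R β t : ℝ} (ht : 0 < t)
    (hz : ‖z‖ ≤ R) (hs : ∀ i, ‖s i‖ ≤ R) (hβ : ∀ i, ‖s i - s' i‖ ≤ β) :
    ∏ i, ‖z - s' i‖ ^ 2 ≤
      (1 + t) ^ (2 * Fintype.card ι) * ∏ i, ‖z - s i‖ ^ 2 +
        {x | ∃ i, dist x (s i) ≤ β / t}.indicator
          (fun _ => (2 * (R + β) * (1 + t)) ^ (2 * Fintype.card ι)) z := by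
  by_cases hnear : z ∈ {x | ∃ i, dist x (s i) ≤ β / t}
  · rw [Set.indicator_of_mem hnear]
    have hfac : ∀ i, ‖z - s' i‖ ≤ 2 * (R + β) * (1 + t) := fun i => by
      have hβi : 0 ≤ β := (norm_nonneg _).trans (hβ i)
      have hR : 0 ≤ R := (norm_nonneg _).trans hz
      calc ‖z - s' i‖ ≤ ‖z - s i‖ + ‖s i - s' i‖ := norm_sub_le_norm_sub_add_norm_sub _ _ _
        _ ≤ (R + R) + β := add_le_add (norm_sub_le_of_le hz (hs i)) (hβ i)
        _ ≤ 2 * (R + β) * (1 + t) := by nlinarith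
    have : 0 ≤ (1 + t) ^ (2 * Fintype.card ι) * ∏ i, ‖z - s i‖ ^ 2 := by positivity
    linarith [prod_norm_sub_sq_le_pow hfac]
  · rw [Set.indicator_of_notMem hnear, add_zero]
    simp only [Set.mem_ofPred_eq, not_exists, not_le] at hnear
    exact prod_norm_sub_sq_le_of_lt_dist ht hβ hnear

end Pointwise

section Integration

variable {Ω : Type*} [MeasurableSpace Ω] {μ : Measure Ω}

lemma integrable_prod_norm_sub_sq [IsFiniteMeasure μ] {ι : Type*} [Fintype ι] {Z : Ω → ℂ}
    (hZ : Measurable Z) {R : ℝ} (hbdd : ∀ ω, ‖Z ω‖ ≤ R) (t : ι → ℂ) :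
    Integrable (fun ω => ∏ i, ‖Z ω - t i‖ ^ 2) μ := by
  refine Integrable.of_bound (C := ∏ i, (R + ‖t i‖) ^ 2) ?_ ?_
  · exact (Finset.measurable_prod _ fun i _ =>
      ((hZ.sub_const (t i)).norm.pow_const 2)).aestronglyMeasurable
  · refine Filter.Eventually.of_forall fun ω => ?_
    rw [Real.norm_of_nonneg (by positivity)]
    exact Finset.prod_le_prod (fun i _ => sq_nonneg _) fun i _ =>
      pow_le_pow_left₀ (norm_nonneg _) (norm_sub_le_of_le (hbdd ω) le_rfl) 2

lemma ofReal_integral_sub_div_le_measure [IsFiniteMeasure μ] {f g : Ω → ℝ} {G : Set Ω}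
    {b : ℝ} (hf : Integrable f μ) (hg : Integrable g μ) (hG : MeasurableSet G) (hb : 0 ≤ b)
    (hfg : ∀ ω, f ω ≤ g ω + G.indicator (fun _ => b) ω) :
    ENNReal.ofReal ((∫ ω, f ω ∂μ - ∫ ω, g ω ∂μ) / b) ≤ μ G := by
  have hind : Integrable (G.indicator fun _ => b) μ := (integrable_const b).indicator hG
  have hint : ∫ ω, f ω ∂μ ≤ ∫ ω, g ω ∂μ + b * μ.real G := by
    have := integral_mono hf (hg.add hind) hfg
    rwa [integral_add' hg hind, integral_indicator_const b hG, smul_eq_mul, mul_comm] at this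
  refine ENNReal.ofReal_le_of_le_toReal ?_
  rcases hb.eq_or_lt with rfl | hb
  · simp
  · rw [div_le_iff₀ hb]
    simp only [measureReal_def] at hint
    linarith

end Integration

theorem stmt9_general {n k : ℕ} (H : Matrix (Fin n) (Fin n) ℂ)
    (hSpec : spectrum ℂ H ⊆ Metric.closedBall 0 (specNorm H))
    {Ω : Type*} [MeasurableSpace Ω] (μ : Measure Ω) [IsProbabilityMeasure μ]
    (Z : Ω → ℂ) (hZ : Measurable Z) (hsupp : ∀ ω, Z ω ∈ spectrum ℂ H)
    (s scheck : Fin k → ℂ) (hs : ∀ i, s i ∈ Metric.closedBall (0 : ℂ) (specNorm H))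
    (β c : ℝ) (hβ : ∀ i, ‖s i - scheck i‖ ≤ β)
    (hc0 : 0 < c) :
    ENNReal.ofReal
        (((∫ ω, (∏ i, ‖Z ω - scheck i‖ ^ 2) ∂μ) -
            (1 + 2 * c) ^ (2 * k) * ∫ ω, (∏ i, ‖Z ω - s i‖ ^ 2) ∂μ) /
          (2 * (specNorm H + β) * (1 + 2 * c)) ^ (2 * k)) ≤
      μ {ω | ∃ i : Fin k, dist (Z ω) (s i) ≤ β / (2 * c)} := by
  have hZbdd : ∀ ω, ‖Z ω‖ ≤ specNorm H := fun ω => mem_closedBall_zero_iff.mp (hSpec (hsupp ω))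
  have hsbdd : ∀ i, ‖s i‖ ≤ specNorm H := fun i => mem_closedBall_zero_iff.mp (hs i)
  have hnear : MeasurableSet {ω | ∃ i : Fin k, dist (Z ω) (s i) ≤ β / (2 * c)} := by
    simp only [Set.ofPred_exists]
    exact .iUnion fun i => measurableSet_le (hZ.dist measurable_const) measurable_const
  rw [← integral_const_mul]
  refine ofReal_integral_sub_div_le_measure (integrable_prod_norm_sub_sq hZ hZbdd scheck)
    ((integrable_prod_norm_sub_sq hZ hZbdd s).const_mul _) hnear
    ((even_two_mul k).pow_nonneg _) fun ω => ?_
  have hpoint := prod_norm_sub_sq_le_add_indicator (by positivity : (0 : ℝ) < 2 * c)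
    (hZbdd ω) hsbdd hβ
  -- The near event is definitionally the preimage under `Z` of the near set in `hpoint`.
  rwa [Fintype.card_fin] at hpoint

/-- Root-perturbation dichotomy bound: if `Z` is a random variable supported on
`Spec(H) ⊆ D(0, ‖H‖)`, `q(z) = ∏ᵢ (z - sᵢ)` with all `sᵢ ∈ D(0, ‖H‖)`,
`q̌(z) = ∏ᵢ (z - šᵢ)` with `|sᵢ - šᵢ| ≤ β`, `0 < c ≤ 1/2`, and `β/c ≤ gap(H)`, then
`Pr[dist(Z, {s₁,…,s_k}) ≤ β/(2c)]
  ≥ (E[|q̌(Z)|²] - (1+2c)^{2k} E[|q(Z)|²]) / (2(‖H‖+β)(1+2c))^{2k}`. -/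
theorem stmt9 {n k : ℕ} (H : Matrix (Fin n) (Fin n) ℂ)
    (hSpec : spectrum ℂ H ⊆ Metric.closedBall 0 (specNorm H))
    {Ω : Type*} [MeasurableSpace Ω] (μ : Measure Ω) [IsProbabilityMeasure μ]
    (Z : Ω → ℂ) (hZ : Measurable Z) (hsupp : ∀ ω, Z ω ∈ spectrum ℂ H)
    (s scheck : Fin k → ℂ) (hs : ∀ i, s i ∈ Metric.closedBall (0 : ℂ) (specNorm H))
    (β c : ℝ) (hβ : ∀ i, ‖s i - scheck i‖ ≤ β)
    (hc0 : 0 < c) (hc : c ≤ 1 / 2) (hgap : β / c ≤ gap H) :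
    ENNReal.ofReal
        (((∫ ω, (∏ i, ‖Z ω - scheck i‖ ^ 2) ∂μ) -
            (1 + 2 * c) ^ (2 * k) * ∫ ω, (∏ i, ‖Z ω - s i‖ ^ 2) ∂μ) /
          (2 * (specNorm H + β) * (1 + 2 * c)) ^ (2 * k)) ≤
      μ {ω | ∃ i : Fin k, dist (Z ω) (s i) ≤ β / (2 * c)} :=
  stmt9_general H hSpec μ Z hZ hsupp s scheck hs β c hβ hc0
end
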